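/- arXiv:1506.04682 — 2 statements merged into one kernel-verified Lean document; each statement's English description precedes it below -/
import Mathlib

section
/- For the triangle connection coefficients, c_{j,m}^{(13)}(κ) = (−1)^{m+j} c_{j,m}^{(12)}((23)κ), where (23)κ = (κ₁,κ₃,κ₂). -/
open Finset

/-- Pochhammer symbol `(a)_n = a(a+1)⋯(a+n-1)`. -/
noncomputable def poch (a : ℝ) (n : ℕ) : ℝ := ∏ k ∈ Finset.range n, (a + k)

/-- Terminating Gauss hypergeometric sum `₂F₁(-n, b; c; z)`. -/
noncomputable def F21 (n : ℕ) (b c z : ℝ) : ℝ :=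
  ∑ k ∈ Finset.range (n + 1),
    poch (-(n : ℝ)) k * poch b k / (poch c k * (Nat.factorial k : ℝ)) * z ^ k

/-- Terminating hypergeometric sum `₄F₃(-m, X, Y, Z; U, V, W; 1)`. -/
noncomputable def F43 (m : ℕ) (X Y Z U V W : ℝ) : ℝ :=
  ∑ k ∈ Finset.range (m + 1),
    poch (-(m : ℝ)) k * poch X k * poch Y k * poch Z k /
      (poch U k * poch V k * poch W k * (Nat.factorial k : ℝ))

/-- Classical Jacobi polynomial `P_n^{(α,β)}`. -/
noncomputable def jacobiP (α β : ℝ) (n : ℕ) (x : ℝ) : ℝ :=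
  poch (α + 1) n / (Nat.factorial n : ℝ) *
    ∑ k ∈ Finset.range (n + 1),
      poch (-(n : ℝ)) k * poch ((n : ℝ) + α + β + 1) k /
        (poch (α + 1) k * (Nat.factorial k : ℝ)) * ((1 - x) / 2) ^ k

/-- The Jacobi basis on the triangle. -/
noncomputable def triP (κ₁ κ₂ κ₃ : ℝ) (n m : ℕ) (x₁ x₂ : ℝ) : ℝ :=
  jacobiP (κ₂ + κ₃ + 2 * (m : ℝ) + 1) κ₁ (n - m) (2 * x₁ - 1) *
    (1 - x₁) ^ m * jacobiP κ₃ κ₂ m (2 * x₂ / (1 - x₁) - 1)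

/-- The triangle Jacobi basis transformed by the transposition (12). -/
noncomputable def triP12 (κ₁ κ₂ κ₃ : ℝ) (n j : ℕ) (x₁ x₂ : ℝ) : ℝ :=
  jacobiP (κ₁ + κ₃ + 2 * (j : ℝ) + 1) κ₂ (n - j) (2 * x₂ - 1) *
    (1 - x₂) ^ j * jacobiP κ₃ κ₁ j (2 * x₁ / (1 - x₂) - 1)

/-- The triangle Jacobi basis transformed by the transposition (13). -/
noncomputable def triP13 (κ₁ κ₂ κ₃ : ℝ) (n j : ℕ) (x₁ x₂ : ℝ) : ℝ :=
  jacobiP (κ₁ + κ₂ + 2 * (j : ℝ) + 1) κ₃ (n - j) (1 - 2 * x₁ - 2 * x₂) *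
    (x₁ + x₂) ^ j * jacobiP κ₁ κ₂ j (2 * x₂ / (x₁ + x₂) - 1)

/-
On the edge `x₁ = 0` every standard basis element `triP κ n m 0 x₂` is a nonzero constant times
the one-variable Jacobi polynomial `P_m^{(κ₃,κ₂)}(2 x₂ - 1)`. The substitution
`x₂ ↦ 1 - x₁ - x₂` turns the `(13)`-basis for `κ` into `(-1)^j` times the `(12)`-basis for `(23)κ`,
and the standard basis for `(23)κ` into `(-1)^m` times the standard basis for `κ`; both are the
reflection symmetry `P_n^{(α,β)}(-x) = (-1)^n P_n^{(β,α)}(x)`. Substituting the second expansion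
into the first and comparing coefficients, which is legitimate because Jacobi polynomials of
distinct degrees are linearly independent, gives the sign rule.

The reflection symmetry is read off the symmetric form
`P_n^{(α,β)}(x) = ∑ₛ C(n+α, n-s) C(n+β, s) ((x-1)/2)^s ((x+1)/2)^(n-s)`, which follows from the
defining hypergeometric sum by the Chu–Vandermonde identity.
-/

open Polynomial

lemma poch_eq_eval_ascPochhammer (a : ℝ) (n : ℕ) : poch a n = (ascPochhammer ℝ n).eval a := by
  induction n with
  | zero => simp [poch]
  | succ n ih => rw [poch, prod_range_succ, ← poch, ih, ascPochhammer_succ_eval]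

lemma poch_div_factorial (a : ℝ) (n : ℕ) :
    poch a n / n.factorial = Ring.choose (a + n - 1) n := by
  rw [← Ring.multichoose_eq, eq_comm, eq_div_iff (by positivity), mul_comm, ← nsmul_eq_mul,
    Ring.factorial_nsmul_multichoose_eq_ascPochhammer, ascPochhammer_smeval_eq_eval,
    poch_eq_eval_ascPochhammer]

lemma poch_add (a : ℝ) (m n : ℕ) : poch a (m + n) = poch a m * poch (a + m) n := by
  simp only [poch, prod_range_add, Nat.cast_add, add_assoc]

lemma poch_neg_natCast (n k : ℕ) : poch (-n) k = (-1) ^ k * n.descFactorial k := by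
  rw [poch_eq_eval_ascPochhammer, ascPochhammer_eval_neg_eq_descPochhammer,
    descPochhammer_eval_eq_descFactorial]

lemma poch_pos {a : ℝ} (ha : 0 < a) (n : ℕ) : 0 < poch a n :=
  prod_pos fun i _ => by positivity

lemma sum_mul_pow_mul_one_add_pow {R : Type*} [CommSemiring R] (a : ℕ → R) (n : ℕ) (w : R) :
    ∑ s ∈ range (n + 1), a s * w ^ s * (1 + w) ^ (n - s) =
      ∑ k ∈ range (n + 1), (∑ s ∈ range (k + 1), a s * (n - s).choose (k - s)) * w ^ k := by
  calc ∑ s ∈ range (n + 1), a s * w ^ s * (1 + w) ^ (n - s)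
      = ∑ s ∈ range (n + 1), ∑ i ∈ range (n + 1 - s),
          a s * (n - s).choose i * w ^ (s + i) := by
        refine sum_congr rfl fun s hs => ?_
        rw [add_comm 1 w, add_pow, mul_sum,
          ← Nat.sub_add_comm (Nat.lt_succ_iff.mp (mem_range.mp hs))]
        refine sum_congr rfl fun i _ => ?_
        rw [one_pow, mul_one, pow_add]
        ring
    _ = ∑ k ∈ range (n + 1), ∑ s ∈ range (k + 1),
          a s * (n - s).choose (k - s) * w ^ (s + (k - s)) :=
        (sum_range_diag_flip _ fun s i => a s * (n - s).choose i * w ^ (s + i)).symm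
    _ = _ := by
        refine sum_congr rfl fun k _ => ?_
        rw [sum_mul]
        refine sum_congr rfl fun s hs => ?_
        rw [Nat.add_sub_cancel' (Nat.lt_succ_iff.mp (mem_range.mp hs))]

-- Trinomial revision turns each summand into a Chu–Vandermonde term.
lemma Ring.sum_choose_mul_choose_mul_choose {R : Type*} [CommRing R] [BinomialRing R] (r s : R)
    {n k : ℕ} (hk : k ≤ n) :
    ∑ i ∈ range (k + 1), Ring.choose r (n - i) * Ring.choose s i * ((n - i).choose (k - i) : R) =
      Ring.choose r (n - k) * Ring.choose (s + (r - (n - k : ℕ))) k := by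
  rw [Ring.add_choose_eq _ (Commute.all _ _), Nat.sum_antidiagonal_eq_sum_range_succ_mk, mul_sum]
  refine sum_congr rfl fun i hi => ?_
  have hi : i ≤ k := Nat.lt_succ_iff.mp (mem_range.mp hi)
  have hsymm : (n - i).choose (k - i) = (n - i).choose (n - k) := by
    rw [← Nat.choose_symm (by omega : k - i ≤ n - i)]
    congr 1
    omega
  have hrev := Ring.choose_smul_choose r (by omega : n - k ≤ n - i)
  rw [show n - i - (n - k) = k - i by omega, nsmul_eq_mul] at hrev
  rw [hsymm]
  linear_combination Ring.choose s i * hrev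

-- `-1 < α` keeps the denominators `(α + 1)_k` of the defining sum away from the junk value `0`.
lemma jacobiP_eq_sum_choose {α : ℝ} (hα : -1 < α) (β : ℝ) (n : ℕ) (x : ℝ) :
    jacobiP α β n x = ∑ k ∈ range (n + 1),
      Ring.choose (n + α) (n - k) * Ring.choose (n + α + β + k) k * ((x - 1) / 2) ^ k := by
  rw [jacobiP, mul_sum]
  refine sum_congr rfl fun k hk => ?_
  have hk : k ≤ n := Nat.lt_succ_iff.mp (mem_range.mp hk)
  have hsplit : poch (α + 1) n = poch (α + 1) k * poch (α + 1 + k) (n - k) := by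
    rw [← poch_add, Nat.add_sub_cancel' hk]
  have hneg : (-1) ^ k * poch (-n) k * (n - k).factorial = n.factorial := by
    rw [poch_neg_natCast, ← mul_assoc, ← mul_pow, mul_assoc, ← Nat.cast_mul,
      mul_comm (n.descFactorial k), Nat.factorial_mul_descFactorial hk]
    norm_num
  have hchoose₁ : Ring.choose (n + α) (n - k) = poch (α + 1 + k) (n - k) / (n - k).factorial := by
    rw [poch_div_factorial, Nat.cast_sub hk]
    ring_nf
  have hchoose₂ : Ring.choose (n + α + β + k) k = poch (n + α + β + 1) k / k.factorial := by
    rw [poch_div_factorial]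
    ring_nf
  have hpoch : poch (α + 1) k ≠ 0 := (poch_pos (by linarith) k).ne'
  rw [hchoose₁, hchoose₂, hsplit, show (1 - x) / 2 = -1 * ((x - 1) / 2) by ring, mul_pow]
  field_simp
  linear_combination (poch (α + 1 + k) (n - k) * poch (n + α + β + 1) k * ((x - 1) / 2) ^ k) * hneg

lemma jacobiP_eq_sum_choose_mul_choose {α : ℝ} (hα : -1 < α) (β : ℝ) (n : ℕ) (x : ℝ) :
    jacobiP α β n x = ∑ s ∈ range (n + 1), Ring.choose (n + α) (n - s) * Ring.choose (n + β) s *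
      ((x - 1) / 2) ^ s * ((x + 1) / 2) ^ (n - s) := by
  rw [jacobiP_eq_sum_choose hα, show (x + 1) / 2 = 1 + (x - 1) / 2 by ring,
    sum_mul_pow_mul_one_add_pow (fun s => Ring.choose (n + α) (n - s) * Ring.choose (n + β) s)]
  refine sum_congr rfl fun k hk => ?_
  have hk : k ≤ n := Nat.lt_succ_iff.mp (mem_range.mp hk)
  rw [Ring.sum_choose_mul_choose_mul_choose _ _ hk, Nat.cast_sub hk]
  ring_nf

lemma jacobiP_neg {α β : ℝ} (hα : -1 < α) (hβ : -1 < β) (n : ℕ) (x : ℝ) :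
    jacobiP α β n (-x) = (-1) ^ n * jacobiP β α n x := by
  rw [jacobiP_eq_sum_choose_mul_choose hα, jacobiP_eq_sum_choose_mul_choose hβ, mul_sum,
    ← sum_range_reflect]
  refine sum_congr rfl fun s hs => ?_
  have hs : s ≤ n := Nat.lt_succ_iff.mp (mem_range.mp hs)
  have hsign : (-1 : ℝ) ^ s * (-1) ^ (n - s) = (-1) ^ n := by
    rw [← pow_add, Nat.add_sub_cancel' hs]
  rw [show n + 1 - 1 - s = n - s by omega, Nat.sub_sub_self hs,
    show (-x - 1) / 2 = -((x + 1) / 2) by ring, show (-x + 1) / 2 = -((x - 1) / 2) by ring,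
    neg_pow ((x + 1) / 2), neg_pow ((x - 1) / 2)]
  linear_combination (Ring.choose (n + α) s * Ring.choose (n + β) (n - s) *
    ((x - 1) / 2) ^ s * ((x + 1) / 2) ^ (n - s)) * hsign

-- `jacobiP α β n` as a polynomial in `(x - 1) / 2`.
noncomputable def jacobiPoly (α β : ℝ) (n : ℕ) : ℝ[X] :=
  ∑ k ∈ range (n + 1), C (Ring.choose (n + α) (n - k) * Ring.choose (n + α + β + k) k) * X ^ k

lemma jacobiP_eq_eval_jacobiPoly {α : ℝ} (hα : -1 < α) (β : ℝ) (n : ℕ) (x : ℝ) :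
    jacobiP α β n x = (jacobiPoly α β n).eval ((x - 1) / 2) := by
  simp [jacobiPoly, eval_finsetSum, jacobiP_eq_sum_choose hα]

lemma degree_jacobiPoly {α β : ℝ} (hαβ : -2 < α + β) (n : ℕ) : (jacobiPoly α β n).degree = n := by
  refine degree_eq_of_le_of_coeff_ne_zero ?_ ?_
  · refine (degree_sum_le _ _).trans (Finset.sup_le fun k hk => ?_)
    refine (degree_C_mul_X_pow_le _ _).trans ?_
    exact_mod_cast Nat.lt_succ_iff.mp (mem_range.mp hk)
  · have hcoeff : (jacobiPoly α β n).coeff n = poch (n + α + β + 1) n / n.factorial := by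
      simp only [jacobiPoly, finsetSum_coeff, coeff_C_mul_X_pow, sum_ite_eq, mem_range,
        Nat.lt_succ_self, if_true, Nat.sub_self, Ring.choose_zero_right, one_mul,
        poch_div_factorial]
      ring_nf
    rw [hcoeff]
    refine div_ne_zero (prod_ne_zero_iff.mpr fun i hi => ?_) (by positivity)
    have hi : (i : ℝ) + 1 ≤ n := by exact_mod_cast mem_range.mp hi
    linarith

lemma eq_zero_of_forall_sum_mul_jacobiP_eq_zero {α β : ℝ} (hα : -1 < α) (hαβ : -2 < α + β)
    {s : Set ℝ} (hs : s.Infinite) {n : ℕ} {e : ℕ → ℝ}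
    (he : ∀ x ∈ s, ∑ m ∈ range (n + 1), e m * jacobiP α β m x = 0) {m : ℕ} (hm : m ≤ n) :
    e m = 0 := by
  have hzero : ∑ m ∈ range (n + 1), e m • jacobiPoly α β m = 0 := by
    have hinj : Set.InjOn (fun x : ℝ => (x - 1) / 2) s := fun x _ y _ hxy => by simpa using hxy
    refine eq_zero_of_infinite_isRoot _ ((hs.image hinj).mono ?_)
    rintro _ ⟨x, hx, rfl⟩
    simp [eval_finsetSum, ← jacobiP_eq_eval_jacobiPoly hα, he x hx]
  let jacobiSeq : Polynomial.Sequence ℝ := ⟨jacobiPoly α β, degree_jacobiPoly hαβ⟩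
  exact linearIndependent_iff'.mp jacobiSeq.linearIndependent _ _ hzero m
    (mem_range.mpr (Nat.lt_succ_of_le hm))

lemma jacobiP_one (α β : ℝ) (n : ℕ) : jacobiP α β n 1 = poch (α + 1) n / n.factorial := by
  simp [jacobiP, sum_range_succ', poch]

lemma jacobiP_neg_one_ne_zero {α β : ℝ} (hα : -1 < α) (hβ : -1 < β) (n : ℕ) :
    jacobiP α β n (-1) ≠ 0 := by
  rw [jacobiP_neg hα hβ, jacobiP_one]
  exact mul_ne_zero (pow_ne_zero _ (by norm_num))
    (div_ne_zero (poch_pos (by linarith) n).ne' (by positivity))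

lemma triP_zero_left (κ₁ κ₂ κ₃ : ℝ) (n m : ℕ) (x₂ : ℝ) :
    triP κ₁ κ₂ κ₃ n m 0 x₂ =
      jacobiP (κ₂ + κ₃ + 2 * m + 1) κ₁ (n - m) (-1) * jacobiP κ₃ κ₂ m (2 * x₂ - 1) := by
  norm_num [triP]

lemma triP_swap₂₃ {κ₂ κ₃ : ℝ} (hκ₂ : -1 < κ₂) (hκ₃ : -1 < κ₃) (κ₁ : ℝ) (n m : ℕ) {x₁ : ℝ}
    (hx₁ : x₁ ≠ 1) (x₂ : ℝ) :
    triP κ₁ κ₃ κ₂ n m x₁ (1 - x₁ - x₂) = (-1) ^ m * triP κ₁ κ₂ κ₃ n m x₁ x₂ := by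
  have h : 1 - x₁ ≠ 0 := sub_ne_zero.mpr hx₁.symm
  rw [triP, triP, add_comm κ₃ κ₂,
    show 2 * (1 - x₁ - x₂) / (1 - x₁) - 1 = -(2 * x₂ / (1 - x₁) - 1) by field_simp; ring,
    jacobiP_neg hκ₂ hκ₃]
  ring

lemma triP13_eq_neg_one_pow_mul_triP12 {κ₁ κ₂ : ℝ} (hκ₁ : -1 < κ₁) (hκ₂ : -1 < κ₂) (κ₃ : ℝ)
    (n j : ℕ) {x₁ x₂ : ℝ} (hx : x₁ + x₂ ≠ 0) :
    triP13 κ₁ κ₂ κ₃ n j x₁ x₂ = (-1) ^ j * triP12 κ₁ κ₃ κ₂ n j x₁ (1 - x₁ - x₂) := by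
  have hsign : (-1 : ℝ) ^ j * (-1) ^ j = 1 := by rw [← mul_pow]; norm_num
  rw [triP13, triP12, show 2 * (1 - x₁ - x₂) - 1 = 1 - 2 * x₁ - 2 * x₂ by ring,
    show 1 - (1 - x₁ - x₂) = x₁ + x₂ by ring,
    show 2 * x₁ / (x₁ + x₂) - 1 = -(2 * x₂ / (x₁ + x₂) - 1) by field_simp; ring,
    jacobiP_neg hκ₂ hκ₁]
  linear_combination (-(jacobiP (κ₁ + κ₂ + 2 * j + 1) κ₃ (n - j) (1 - 2 * x₁ - 2 * x₂) *
    (x₁ + x₂) ^ j * jacobiP κ₁ κ₂ j (2 * x₂ / (x₁ + x₂) - 1))) * hsign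

lemma eq_zero_of_forall_sum_mul_triP_zero_left_eq_zero {κ₁ κ₂ κ₃ : ℝ} (hκ₁ : -1 < κ₁)
    (hκ₂ : -1 < κ₂) (hκ₃ : -1 < κ₃) {n : ℕ} {e : ℕ → ℝ}
    (he : ∀ x₂ : ℝ, x₂ ≠ 0 → x₂ ≠ 1 → ∑ m ∈ range (n + 1), e m * triP κ₁ κ₂ κ₃ n m 0 x₂ = 0)
    {m : ℕ} (hm : m ≤ n) : e m = 0 := by
  set A : ℕ → ℝ := fun m => jacobiP (κ₂ + κ₃ + 2 * m + 1) κ₁ (n - m) (-1)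
  have hA : A m ≠ 0 :=
    jacobiP_neg_one_ne_zero (by linarith [(m.cast_nonneg : (0 : ℝ) ≤ m)]) hκ₁ _
  refine (mul_eq_zero.mp ?_).resolve_right hA
  refine eq_zero_of_forall_sum_mul_jacobiP_eq_zero (β := κ₂) (e := fun m => e m * A m) hκ₃
    (by linarith) (Set.toFinite {-1, 1}).infinite_compl (fun x hx => ?_) hm
  have hx : x ≠ -1 ∧ x ≠ 1 := by simpa using hx
  have h := he ((x + 1) / 2) (fun h => hx.1 (by linarith)) (fun h => hx.2 (by linarith))
  simpa [A, triP_zero_left, mul_assoc, show 2 * ((x + 1) / 2) - 1 = x by ring] using h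

/-- `c_{j,m}^{(13)}(κ) = (-1)^{m+j} c_{j,m}^{(12)}((23)κ)` where `(23)κ = (κ₁,κ₃,κ₂)`:
if `c13` is the family of connection coefficients expressing the `(13)`-basis in the
standard basis with parameter `κ`, and `c12` the family expressing the `(12)`-basis in the
standard basis with parameter `(23)κ`, then `c13 j m = (-1)^{m+j} c12 j m`. -/
theorem stmt_8 (κ₁ κ₂ κ₃ : ℝ) (hκ₁ : -1 < κ₁) (hκ₂ : -1 < κ₂) (hκ₃ : -1 < κ₃)
    (n : ℕ) (c13 c12 : ℕ → ℕ → ℝ)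
    (h13 : ∀ j ≤ n, ∀ x₁ x₂ : ℝ, x₁ ≠ 1 → x₂ ≠ 1 → x₁ + x₂ ≠ 0 →
      triP13 κ₁ κ₂ κ₃ n j x₁ x₂ =
        ∑ m ∈ Finset.range (n + 1), c13 j m * triP κ₁ κ₂ κ₃ n m x₁ x₂)
    (h12 : ∀ j ≤ n, ∀ x₁ x₂ : ℝ, x₁ ≠ 1 → x₂ ≠ 1 → x₁ + x₂ ≠ 0 →
      triP12 κ₁ κ₃ κ₂ n j x₁ x₂ =
        ∑ m ∈ Finset.range (n + 1), c12 j m * triP κ₁ κ₃ κ₂ n m x₁ x₂) :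
    ∀ j ≤ n, ∀ m ≤ n, c13 j m = (-1 : ℝ) ^ (m + j) * c12 j m := by
  intro j hj m hm
  refine sub_eq_zero.mp (eq_zero_of_forall_sum_mul_triP_zero_left_eq_zero hκ₁ hκ₂ hκ₃
    (e := fun m => c13 j m - (-1) ^ (m + j) * c12 j m) (fun x₂ h₀ h₁ => ?_) hm)
  have hx : (0 : ℝ) + x₂ ≠ 0 := by simpa using h₀
  have h12' := h12 j hj 0 (1 - 0 - x₂) zero_ne_one (by simpa using h₀)
    (by simpa [sub_eq_zero] using h₁.symm)
  simp only [triP_swap₂₃ hκ₂ hκ₃ κ₁ n _ zero_ne_one x₂] at h12'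
  have h13' := h13 j hj 0 x₂ zero_ne_one h₁ hx
  rw [triP13_eq_neg_one_pow_mul_triP12 hκ₁ hκ₂ κ₃ n j hx, h12', mul_sum, eq_comm] at h13'
  simp only [sub_mul, sum_sub_distrib, sub_eq_zero, h13']
  exact sum_congr rfl fun m _ => by ring
end

section
/- For the dual Krawtchouk parameters ρ̃_j = ρ_{d+1−j}(1−|ρ|)/[(1−|ρ_{d+1−j}^{(partial)}|)(1−|ρ_{d−j}^{(partial)}|)] one has the identity ∑_{j=1}^d ρ̃_j = ∑_{j=1}^d ρ_j, i.e., |ρ̃| = |ρ|. -/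
open Finset

/-- The dual Krawtchouk parameters (0-based indexing via `Fin.rev`). -/
noncomputable def dualRho (d : ℕ) (ρ : Fin d → ℝ) : Fin d → ℝ :=
  fun j =>
    ρ (Fin.rev j) * (1 - ∑ i, ρ i) /
      ((1 - ∑ i ∈ Finset.univ.filter (fun i : Fin d => (i : ℕ) ≤ ((Fin.rev j : Fin d) : ℕ)), ρ i) *
        (1 - ∑ i ∈ Finset.univ.filter (fun i : Fin d => (i : ℕ) < ((Fin.rev j : Fin d) : ℕ)), ρ i))

/-! With `T k = ρ₀ + ⋯ + ρ_{k-1}` and `S = T d`, the `j`-th dual parameter equals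
`(1 - S) / (1 - T (m + 1)) - (1 - S) / (1 - T m)` for `m = d - 1 - j`, so the sum telescopes to
`(1 - S) / (1 - S) - (1 - S) / 1 = S`. Positivity of the `ρ i` and `S < 1` keep every `1 - T k`
away from zero. -/

section PrefixSum

variable {M : Type*} [AddCommMonoid M] {d : ℕ}

def prefixSum (ρ : Fin d → M) (k : ℕ) : M :=
  ∑ i ∈ univ.filter (fun i : Fin d => (i : ℕ) < k), ρ i

lemma prefixSum_zero (ρ : Fin d → M) : prefixSum ρ 0 = 0 := by
  simp [prefixSum]

lemma prefixSum_of_le (ρ : Fin d → M) {k : ℕ} (hk : d ≤ k) : prefixSum ρ k = ∑ i, ρ i := by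
  unfold prefixSum
  rw [filter_true_of_mem fun i _ => i.isLt.trans_le hk]

lemma prefixSum_succ (ρ : Fin d → M) (m : Fin d) :
    prefixSum ρ (m + 1) = prefixSum ρ m + ρ m := by
  have hinsert : univ.filter (fun i : Fin d => (i : ℕ) < m + 1)
      = insert m (univ.filter fun i : Fin d => (i : ℕ) < m) := by
    ext i
    simp only [mem_filter, mem_univ, true_and, mem_insert, Fin.ext_iff]
    omega
  rw [prefixSum, hinsert, sum_insert (by simp), add_comm, prefixSum]

lemma sum_filter_le_eq_prefixSum (ρ : Fin d → M) (m : ℕ) :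
    ∑ i ∈ univ.filter (fun i : Fin d => (i : ℕ) ≤ m), ρ i = prefixSum ρ (m + 1) := by
  simp only [prefixSum, Nat.lt_succ_iff]

lemma prefixSum_le_sum {N : Type*} [AddCommMonoid N] [PartialOrder N]
    [IsOrderedAddMonoid N] {ρ : Fin d → N} (hρ : ∀ i, 0 ≤ ρ i) (k : ℕ) :
    prefixSum ρ k ≤ ∑ i, ρ i :=
  sum_le_sum_of_subset_of_nonneg (filter_subset _ _) fun i _ _ => hρ i

end PrefixSum

lemma Fin.sum_univ_sub {G : Type*} [AddCommGroup G] (f : ℕ → G) (d : ℕ) :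
    ∑ m : Fin d, (f (m + 1) - f m) = f d - f 0 := by
  rw [Fin.sum_univ_eq_sum_range (fun k => f (k + 1) - f k), sum_range_sub]

lemma mul_div_sub_one_mul_sub_one {K : Type*} [Field K] {t u : K} (s : K)
    (ht : 1 - t ≠ 0) (hu : 1 - u ≠ 0) :
    (u - t) * s / ((1 - u) * (1 - t)) = s / (1 - u) - s / (1 - t) := by
  field_simp
  ring

lemma dualRho_rev (d : ℕ) (ρ : Fin d → ℝ) (m : Fin d) :
    dualRho d ρ m.rev = ρ m * (1 - ∑ i, ρ i) /
      ((1 - prefixSum ρ (m + 1)) * (1 - prefixSum ρ m)) := by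
  simp only [dualRho, Fin.rev_rev, sum_filter_le_eq_prefixSum]
  rfl

/-- The dual Krawtchouk parameters have the same total sum: `|ρ̃| = |ρ|`. -/
theorem stmt_15 (d : ℕ) (ρ : Fin d → ℝ)
    (hρ : ∀ i, 0 < ρ i ∧ ρ i < 1) (hρs : ∑ i, ρ i < 1) :
    ∑ j, dualRho d ρ j = ∑ j, ρ j := by
  have hT_ne (k : ℕ) : 1 - prefixSum ρ k ≠ 0 := by
    have := prefixSum_le_sum (fun i => (hρ i).1.le) k
    linarith
  set f : ℕ → ℝ := fun k => (1 - ∑ i, ρ i) / (1 - prefixSum ρ k)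
  have hterm (m : Fin d) : dualRho d ρ m.rev = f (m + 1) - f m := by
    rw [dualRho_rev, ← mul_div_sub_one_mul_sub_one _ (hT_ne m) (hT_ne (m + 1)),
      prefixSum_succ, add_sub_cancel_left]
  calc ∑ j, dualRho d ρ j = ∑ m : Fin d, dualRho d ρ m.rev := (Equiv.sum_comp Fin.revPerm _).symm
    _ = f d - f 0 := by simp only [hterm, Fin.sum_univ_sub]
    _ = ∑ j, ρ j := by
      have hS : 1 - ∑ i, ρ i ≠ 0 := by linarith
      simp only [f, prefixSum_zero, prefixSum_of_le ρ le_rfl, div_self hS, sub_zero, div_one]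
      ring
end
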